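/- Let n ≥ 3, let α₁,…,αₙ ∈ ℝ with a := Σₖ αₖ² ≠ 0, and let φ, f, ν, λ : ℝ → ℝ be smooth functions such that φ never vanishes and f' never vanishes. Define Φ, F, N, Λ : ℝⁿ → ℝ by Φ(x) = φ(u(x)), F(x) = f(u(x)), N(x) = ν(u(x)), Λ(x) = λ(u(x)), where u(x) = Σₖ αₖ xₖ. Then the system of equations: (i) for all x ∈ ℝⁿ and all indices i ≠ j, (n−2)·∂ᵢ∂ⱼΦ(x)/Φ(x) + ∂ᵢ∂ⱼF(x) + ∂ᵢF(x)·∂ⱼΦ(x)/Φ(x) + ∂ᵢΦ(x)·∂ⱼF(x)/Φ(x) − N(x)·∂ᵢF(x)·∂ⱼF(x) = 0, and (ii) for all x ∈ ℝⁿ and every index i, (n−2)·∂ᵢ∂ᵢΦ(x)/Φ(x) + ∂ᵢ∂ᵢF(x) + 2∂ᵢF(x)·∂ᵢΦ(x)/Φ(x) − N(x)·(∂ᵢF(x))² + Σ_{k=1}^n [∂ₖ∂ₖΦ(x)/Φ(x) − (n−1)(∂ₖΦ(x)/Φ(x))² − ∂ₖF(x)·∂ₖΦ(x)/Φ(x)]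 = Λ(x)/Φ(x)², holds if and only if for all t ∈ ℝ: ν(t) = (1/f'(t)²)·[(n−2)·φ''(t)/φ(t) + f''(t) + 2f'(t)·φ'(t)/φ(t)] and λ(t) = a·[φ(t)·φ''(t) − f'(t)·φ(t)·φ'(t) − (n−1)·φ'(t)²]. -/

import Mathlib

/-- The partial derivative of `F` in the `i`-th coordinate direction. -/
noncomputable def pd {n : ℕ} (F : EuclideanSpace ℝ (Fin n) → ℝ) (i : Fin n)
    (x : EuclideanSpace ℝ (Fin n)) : ℝ :=
  fderiv ℝ F x (EuclideanSpace.single i 1)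

/-- The second partial derivative `∂ᵢ∂ⱼF`. -/
noncomputable def pd2 {n : ℕ} (F : EuclideanSpace ℝ (Fin n) → ℝ) (i j : Fin n)
    (x : EuclideanSpace ℝ (Fin n)) : ℝ :=
  pd (fun y => pd F j y) i x

noncomputable def Lmap {n : ℕ} (α : Fin n → ℝ) : EuclideanSpace ℝ (Fin n) →L[ℝ] ℝ :=
  ∑ k : Fin n, α k • (EuclideanSpace.proj k : EuclideanSpace ℝ (Fin n) →L[ℝ] ℝ)

lemma Lmap_apply {n : ℕ} (α : Fin n → ℝ) (x : EuclideanSpace ℝ (Fin n)) :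
    Lmap α x = ∑ k : Fin n, α k * x k := by
  simp [Lmap]

lemma Lmap_single {n : ℕ} (α : Fin n → ℝ) (i : Fin n) :
    Lmap α (EuclideanSpace.single i 1) = α i := by
  simp [Lmap_apply, EuclideanSpace.single_apply]

lemma hasFDerivAt_u {n : ℕ} (α : Fin n → ℝ) (u : EuclideanSpace ℝ (Fin n) → ℝ)
    (hu : ∀ x, u x = ∑ k : Fin n, α k * x k) (x : EuclideanSpace ℝ (Fin n)) :
    HasFDerivAt u (Lmap α) x := by
  have h : u = fun x => Lmap α x := funext fun y => by rw [hu, Lmap_apply]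
  rw [h]
  exact (Lmap α).hasFDerivAt

lemma pd_comp {n : ℕ} (α : Fin n → ℝ) (u : EuclideanSpace ℝ (Fin n) → ℝ)
    (hu : ∀ x, u x = ∑ k : Fin n, α k * x k)
    (g : ℝ → ℝ) (hg : ContDiff ℝ (⊤ : ℕ∞) g) (i : Fin n) (x : EuclideanSpace ℝ (Fin n)) :
    pd (fun y => g (u y)) i x = deriv g (u x) * α i := by
  have hg' : HasDerivAt g (deriv g (u x)) (u x) :=
    ((hg.differentiable (by simp)) (u x)).hasDerivAt
  have h := hg'.comp_hasFDerivAt x (hasFDerivAt_u α u hu x)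
  have h2 : fderiv ℝ (fun y => g (u y)) x = deriv g (u x) • Lmap α := h.fderiv
  unfold pd
  rw [h2]
  simp [Lmap_single]

lemma pd2_comp {n : ℕ} (α : Fin n → ℝ) (u : EuclideanSpace ℝ (Fin n) → ℝ)
    (hu : ∀ x, u x = ∑ k : Fin n, α k * x k)
    (g : ℝ → ℝ) (hg : ContDiff ℝ (⊤ : ℕ∞) g) (i j : Fin n) (x : EuclideanSpace ℝ (Fin n)) :
    pd2 (fun y => g (u y)) i j x = deriv (deriv g) (u x) * α i * α j := by
  have hg1 : ContDiff ℝ (⊤ : ℕ∞) (deriv g) := (contDiff_infty_iff_deriv.mp hg).2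
  have hkey : (fun y => pd (fun z => g (u z)) j y) = fun y => deriv g (u y) * α j :=
    funext fun y => pd_comp α u hu g hg j y
  unfold pd2
  rw [hkey]
  have hdiff : DifferentiableAt ℝ (fun y => deriv g (u y)) x := by
    have h1 : HasDerivAt (deriv g) (deriv (deriv g) (u x)) (u x) :=
      ((hg1.differentiable (by simp)) (u x)).hasDerivAt
    exact (h1.comp_hasFDerivAt x (hasFDerivAt_u α u hu x)).differentiableAt
  have hc : pd (fun y => deriv g (u y) * α j) i x
      = pd (fun y => deriv g (u y)) i x * α j := by
    unfold pd
    rw [fderiv_mul_const hdiff]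
    simp [mul_comm]
  rw [hc, pd_comp α u hu (deriv g) hg1 i x]

lemma u_surj {n : ℕ} (α : Fin n → ℝ) (u : EuclideanSpace ℝ (Fin n) → ℝ)
    (hu : ∀ x, u x = ∑ k : Fin n, α k * x k)
    (k0 : Fin n) (hk0 : α k0 ≠ 0) (t : ℝ) : ∃ x, u x = t := by
  refine ⟨(t / α k0) • EuclideanSpace.single k0 1, ?_⟩
  rw [hu]
  simp only [PiLp.smul_apply, EuclideanSpace.single_apply, smul_eq_mul, mul_ite, mul_one,
    mul_zero, Finset.sum_ite_eq', Finset.mem_univ, if_true]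
  field_simp

theorem stmt_1 (n : ℕ) (hn : 3 ≤ n)
    (α : Fin n → ℝ) (a : ℝ) (ha_def : a = ∑ k : Fin n, (α k) ^ 2) (ha : a ≠ 0)
    (φ f ν lam : ℝ → ℝ)
    (hφ : ContDiff ℝ (⊤ : ℕ∞) φ) (hf : ContDiff ℝ (⊤ : ℕ∞) f)
    (hν : ContDiff ℝ (⊤ : ℕ∞) ν) (hlam : ContDiff ℝ (⊤ : ℕ∞) lam)
    (hφ0 : ∀ t : ℝ, φ t ≠ 0)
    (hf' : ∀ t : ℝ, deriv f t ≠ 0)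
    (u : EuclideanSpace ℝ (Fin n) → ℝ)
    (hu : ∀ x, u x = ∑ k : Fin n, α k * x k)
    (Φ F N Λ : EuclideanSpace ℝ (Fin n) → ℝ)
    (hΦ : ∀ x, Φ x = φ (u x))
    (hF : ∀ x, F x = f (u x))
    (hN : ∀ x, N x = ν (u x))
    (hΛ : ∀ x, Λ x = lam (u x)) :
    ((∀ x : EuclideanSpace ℝ (Fin n), ∀ i j : Fin n, i ≠ j →
        ((n : ℝ) - 2) * pd2 Φ i j x / Φ x + pd2 F i j x
          + pd F i x * pd Φ j x / Φ x + pd Φ i x * pd F j x / Φ x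
          - N x * pd F i x * pd F j x = 0) ∧
      (∀ x : EuclideanSpace ℝ (Fin n), ∀ i : Fin n,
        ((n : ℝ) - 2) * pd2 Φ i i x / Φ x + pd2 F i i x
          + 2 * pd F i x * pd Φ i x / Φ x - N x * (pd F i x) ^ 2
          + ∑ k : Fin n, (pd2 Φ k k x / Φ x
              - ((n : ℝ) - 1) * (pd Φ k x / Φ x) ^ 2
              - pd F k x * pd Φ k x / Φ x)
          = Λ x / (Φ x) ^ 2))
    ↔ (∀ t : ℝ,
        ν t = 1 / (deriv f t) ^ 2 *
            (((n : ℝ) - 2) * deriv (deriv φ) t / φ t + deriv (deriv f) t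
              + 2 * deriv f t * deriv φ t / φ t) ∧
        lam t = a * (φ t * deriv (deriv φ) t - deriv f t * φ t * deriv φ t
              - ((n : ℝ) - 1) * (deriv φ t) ^ 2)) := by
  have hφ' : ContDiff ℝ (⊤ : ℕ∞) φ := hφ.of_le (by simp)
  have hf2 : ContDiff ℝ (⊤ : ℕ∞) f := hf.of_le (by simp)
  have hΦf : Φ = fun y => φ (u y) := funext hΦ
  have hFf : F = fun y => f (u y) := funext hF
  obtain ⟨k0, hk0⟩ : ∃ k, α k ≠ 0 := by
    by_contra h
    push_neg at h
    exact ha (by rw [ha_def]; simp [h])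
  haveI : Nontrivial (Fin n) := Fin.nontrivial_iff_two_le.mpr (by omega)
  obtain ⟨j0, hj0⟩ := exists_ne k0
  constructor
  · rintro ⟨h1, h2⟩ t
    obtain ⟨x, hx⟩ := u_surj α u hu k0 hk0 t
    have key1 : ∀ i j : Fin n, i ≠ j →
        α i * α j * (((n:ℝ)-2) * deriv (deriv φ) t / φ t + deriv (deriv f) t
          + 2 * deriv f t * deriv φ t / φ t - ν t * (deriv f t)^2) = 0 := by
      intro i j hij
      have h := h1 x i j hij
      rw [hΦf, hFf] at h
      simp only [pd2_comp α u hu φ hφ', pd2_comp α u hu f hf2,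
        pd_comp α u hu φ hφ', pd_comp α u hu f hf2, hN, hx] at h
      linear_combination h
    have key2 : ∀ i : Fin n,
        α i * α i * (((n:ℝ)-2) * deriv (deriv φ) t / φ t + deriv (deriv f) t
          + 2 * deriv f t * deriv φ t / φ t - ν t * (deriv f t)^2)
        + a * (deriv (deriv φ) t / φ t - ((n:ℝ)-1) * (deriv φ t / φ t)^2
            - deriv f t * deriv φ t / φ t) = lam t / (φ t)^2 := by
      intro i
      have h := h2 x i
      rw [hΦf, hFf] at h
      simp only [pd2_comp α u hu φ hφ', pd2_comp α u hu f hf2,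
        pd_comp α u hu φ hφ', pd_comp α u hu f hf2, hN, hΛ, hx] at h
      have hsum : ∑ k : Fin n, (deriv (deriv φ) t * α k * α k / φ t
          - ((n:ℝ)-1) * (deriv φ t * α k / φ t)^2
          - deriv f t * α k * (deriv φ t * α k) / φ t)
          = a * (deriv (deriv φ) t / φ t - ((n:ℝ)-1) * (deriv φ t / φ t)^2
            - deriv f t * deriv φ t / φ t) := by
        rw [ha_def, Finset.sum_mul]
        exact Finset.sum_congr rfl fun k _ => by ring
      linear_combination h - hsum
    have hij2 : ∀ i j : Fin n, (α i * α i - α j * α j) *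
        (((n:ℝ)-2) * deriv (deriv φ) t / φ t + deriv (deriv f) t
          + 2 * deriv f t * deriv φ t / φ t - ν t * (deriv f t)^2) = 0 :=
      fun i j => by linear_combination key2 i - key2 j
    have hB : ((n:ℝ)-2) * deriv (deriv φ) t / φ t + deriv (deriv f) t
          + 2 * deriv f t * deriv φ t / φ t - ν t * (deriv f t)^2 = 0 := by
      by_contra hB0
      have hz : ∀ j, j ≠ k0 → α j = 0 := by
        intro j hj
        have h := key1 j k0 hj
        rcases mul_eq_zero.mp h with h' | h'
        · rcases mul_eq_zero.mp h' with h'' | h''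
          · exact h''
          · exact absurd h'' hk0
        · exact absurd h' hB0
      have h := hij2 k0 j0
      rw [hz j0 hj0, mul_zero, sub_zero] at h
      rcases mul_eq_zero.mp h with h' | h'
      · rcases mul_eq_zero.mp h' with h'' | h'' <;> exact hk0 h''
      · exact hB0 h'
    constructor
    · have h5 : ν t * (deriv f t)^2 = ((n:ℝ)-2) * deriv (deriv φ) t / φ t
          + deriv (deriv f) t + 2 * deriv f t * deriv φ t / φ t := by
        linear_combination -hB
      have hrw : 1 / (deriv f t) ^ 2 *
            (((n : ℝ) - 2) * deriv (deriv φ) t / φ t + deriv (deriv f) t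
              + 2 * deriv f t * deriv φ t / φ t)
          = (((n : ℝ) - 2) * deriv (deriv φ) t / φ t + deriv (deriv f) t
              + 2 * deriv f t * deriv φ t / φ t) / (deriv f t) ^ 2 := by ring
      rw [hrw, eq_div_iff (pow_ne_zero 2 (hf' t))]
      exact h5
    · have h6 := key2 k0
      rw [hB, mul_zero, zero_add, eq_comm, div_eq_iff (pow_ne_zero 2 (hφ0 t))] at h6
      rw [h6]
      field_simp [hφ0 t]
      ring
  · intro h
    have hBall : ∀ s : ℝ, ((n:ℝ)-2) * deriv (deriv φ) s / φ s + deriv (deriv f) s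
        + 2 * deriv f s * deriv φ s / φ s - ν s * (deriv f s)^2 = 0 := by
      intro s
      obtain ⟨hν', -⟩ := h s
      rw [hν']
      field_simp [hf' s, hφ0 s]
      ring
    have hCall : ∀ s : ℝ, lam s / (φ s)^2
        = a * (deriv (deriv φ) s / φ s - ((n:ℝ)-1) * (deriv φ s / φ s)^2
            - deriv f s * deriv φ s / φ s) := by
      intro s
      obtain ⟨-, hlam9⟩ := h s
      rw [hlam9]
      field_simp [hφ0 s]
      ring
    constructor
    · intro x i j hij
      rw [hΦf, hFf]
      simp only [pd2_comp α u hu φ hφ', pd2_comp α u hu f hf2,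
        pd_comp α u hu φ hφ', pd_comp α u hu f hf2, hN]
      linear_combination (α i * α j) * hBall (u x)
    · intro x i
      rw [hΦf, hFf]
      simp only [pd2_comp α u hu φ hφ', pd2_comp α u hu f hf2,
        pd_comp α u hu φ hφ', pd_comp α u hu f hf2, hN, hΛ]
      have hsum : ∑ k : Fin n, (deriv (deriv φ) (u x) * α k * α k / φ (u x)
          - ((n:ℝ)-1) * (deriv φ (u x) * α k / φ (u x))^2
          - deriv f (u x) * α k * (deriv φ (u x) * α k) / φ (u x))
          = a * (deriv (deriv φ) (u x) / φ (u x)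
              - ((n:ℝ)-1) * (deriv φ (u x) / φ (u x))^2
              - deriv f (u x) * deriv φ (u x) / φ (u x)) := by
        rw [ha_def, Finset.sum_mul]
        exact Finset.sum_congr rfl fun k _ => by ring
      linear_combination (α i * α i) * hBall (u x) + hsum - hCall (u x)
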